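/- Let G be a group and H a subgroup such that every normalized right transversal of H in G is right conjugacy closed. If [G:H] is finite or H is finite, then H is normal in G. -/

import Mathlib

/-!
If `H` is not normal, there are `x` with `x * x ∉ H` and `k ∈ H` with `x k x⁻¹ ∉ H`. Then every
right coset `Hg` contains some `s` with `x s ∉ H` (otherwise `x g` and `x k g` both lie in `H`,
and so does `x k x⁻¹`), so some normalized right transversal `S` contains `x` but no `s` with
`x s ∈ H` (the prescribed representatives `1` and `x` qualify as `x ∉ H` and `x * x ∉ H`):
`x` has no right inverse in `(S, ∘)`. On the other hand, if `y ∘ x = 1`, then the identity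
`R_x R_y R_x⁻¹ = R_z` of right conjugacy closedness, evaluated at `1`, reads `1 = x ∘ z`.
-/

variable {G : Type*} [Group G]

/-- `S` is a normalized right transversal of `H` in `G`: `1 ∈ S` and `S` contains
exactly one element of each right coset `Hg` (note `s ∈ Hg ↔ s * g⁻¹ ∈ H`). -/
def IsNRT (H : Subgroup G) (S : Set G) : Prop :=
  (1 : G) ∈ S ∧ ∀ g : G, ∃! s, s ∈ S ∧ s * g⁻¹ ∈ H

/-- `S` is a left transversal: exactly one element in each left coset `gH`. -/
def IsLeftT (H : Subgroup G) (S : Set G) : Prop :=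
  ∀ g : G, ∃! s, s ∈ S ∧ g⁻¹ * s ∈ H

/-- `op` is the induced operation on `S`: `op x y` is the element of `S ∩ Hxy`. -/
def IsOp (H : Subgroup G) (S : Set G) (op : G → G → G) : Prop :=
  ∀ x ∈ S, ∀ y ∈ S, op x y ∈ S ∧ op x y * (x * y)⁻¹ ∈ H

/-- `sig x h = σ_x(h)`: the `H`-part in the factorization `x*h = σ_x(h)·(xθh)`,
with `xθh = (sig x h)⁻¹ * (x*h) ∈ S`. -/
def IsSig (H : Subgroup G) (S : Set G) (sig : G → G → G) : Prop :=
  ∀ x ∈ S, ∀ h ∈ H, sig x h ∈ H ∧ (sig x h)⁻¹ * (x * h) ∈ S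

open QuotientGroup

section

variable {H : Subgroup G}

theorem exists_mul_self_notMem_and_conj_notMem_of_not_normal (hn : ¬ H.Normal) :
    ∃ x, x * x ∉ H ∧ ∃ k ∈ H, x * k * x⁻¹ ∉ H := by
  obtain ⟨g, k, hk, hgk⟩ : ∃ g k, k ∈ H ∧ g * k * g⁻¹ ∉ H := by
    by_contra! h
    exact hn ⟨fun k hk g => h g k hk⟩
  by_cases hg2 : g * g ∈ H
  · refine ⟨k * g, fun h => hgk ?_, k, hk, fun h => hgk ?_⟩
    · have : g * k * g⁻¹ = k⁻¹ * (k * g * (k * g)) * (g * g)⁻¹ := by group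
      rw [this]
      exact mul_mem (mul_mem (inv_mem hk) h) (inv_mem hg2)
    · have : g * k * g⁻¹ = k⁻¹ * (k * g * k * (k * g)⁻¹) * k := by group
      rw [this]
      exact mul_mem (mul_mem (inv_mem hk) h) hk
  · exact ⟨g, hg2, k, hk, hgk⟩

theorem exists_mul_inv_mem_and_mul_notMem {x k : G} (hk : k ∈ H) (hxk : x * k * x⁻¹ ∉ H)
    (g : G) : ∃ s, s * g⁻¹ ∈ H ∧ x * s ∉ H := by
  by_contra! h
  have hxg : x * g ∈ H := h g (by simp)
  have hxkg : x * (k * g) ∈ H := h (k * g) (by simpa)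
  have : x * k * x⁻¹ = x * (k * g) * (x * g)⁻¹ := by group
  exact hxk (this ▸ mul_mem hxkg (inv_mem hxg))

theorem isNRT_range_of_rightInverse {f : Quotient (rightRel H) → G}
    (hf : Function.RightInverse f (Quotient.mk _)) (hf1 : f (Quotient.mk _ 1) = 1) :
    IsNRT H (Set.range f) := by
  have hmk : ∀ a b : G, Quotient.mk (rightRel H) a = Quotient.mk _ b ↔ a * b⁻¹ ∈ H := by
    intro a b
    rw [Quotient.eq, rightRel_apply, ← inv_mem_iff, mul_inv_rev, inv_inv]
  refine ⟨⟨_, hf1⟩, fun g => ⟨f (Quotient.mk _ g), ⟨⟨_, rfl⟩, (hmk _ _).1 (hf _)⟩, ?_⟩⟩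
  rintro _ ⟨⟨q, rfl⟩, hq⟩
  rw [← (hmk _ _).2 hq, hf]

theorem exists_isNRT_mem_of_forall_exists (P : G → Prop) (hP : ∀ g, ∃ s, s * g⁻¹ ∈ H ∧ P s) (hP1 : P 1)
    {x : G} (hx : x ∉ H) (hPx : P x) : ∃ S, IsNRT H S ∧ x ∈ S ∧ ∀ s ∈ S, P s := by
  classical
  choose f hfH hfP using fun q : Quotient (rightRel H) => hP q.out
  let g := Function.update (Function.update f (Quotient.mk _ x) x) (Quotient.mk _ 1) 1
  have hx1 : Quotient.mk (rightRel H) x ≠ Quotient.mk _ 1 := by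
    rwa [Ne, Quotient.eq, rightRel_apply, one_mul, inv_mem_iff]
  have hg1 : g (Quotient.mk _ 1) = 1 := Function.update_self ..
  have hgx : g (Quotient.mk _ x) = x :=
    (Function.update_of_ne hx1 ..).trans (Function.update_self ..)
  have hgf : ∀ q, q ≠ Quotient.mk _ 1 → q ≠ Quotient.mk _ x → g q = f q := fun q h1 h2 =>
    (Function.update_of_ne h1 ..).trans (Function.update_of_ne h2 ..)
  have hg : Function.RightInverse g (Quotient.mk _) := by
    intro q
    by_cases h1 : q = Quotient.mk _ 1
    · rw [h1, hg1]
    by_cases h2 : q = Quotient.mk _ x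
    · rw [h2, hgx]
    · conv_rhs => rw [← q.out_eq]
      rw [hgf q h1 h2, Quotient.eq, rightRel_apply, ← inv_mem_iff]
      simpa using hfH q
  refine ⟨Set.range g, isNRT_range_of_rightInverse hg hg1, ⟨_, hgx⟩, ?_⟩
  rintro _ ⟨q, rfl⟩
  by_cases h1 : q = Quotient.mk _ 1
  · rwa [h1, hg1]
  by_cases h2 : q = Quotient.mk _ x
  · rwa [h2, hgx]
  · rw [hgf q h1 h2]
    exact hfP q

variable {S : Set G} {op : G → G → G}

theorem IsNRT.exists_isOp (hS : IsNRT H S) : ∃ op : G → G → G, IsOp H S op :=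
  ⟨fun x y => (hS.2 (x * y)).exists.choose, fun _ _ _ _ => (hS.2 _).exists.choose_spec⟩

theorem IsOp.eq_of_mem (hop : IsOp H S op) (hS : IsNRT H S) {x y s : G} (hx : x ∈ S)
    (hy : y ∈ S) (hs : s ∈ S) (hsxy : s * (x * y)⁻¹ ∈ H) : op x y = s :=
  (hS.2 (x * y)).unique (hop x hx y hy) ⟨hs, hsxy⟩

theorem IsOp.one_op (hop : IsOp H S op) (hS : IsNRT H S) {y : G} (hy : y ∈ S) : op 1 y = y :=
  hop.eq_of_mem hS hS.1 hy hy (by simp)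

theorem IsOp.exists_op_eq_one (hop : IsOp H S op) (hS : IsNRT H S) {x : G} (hx : x ∈ S) :
    ∃ y ∈ S, op y x = 1 := by
  obtain ⟨y, ⟨hy, hyx⟩, -⟩ := hS.2 x⁻¹
  exact ⟨y, hy, hop.eq_of_mem hS hy hx hS.1 (by simpa using inv_mem hyx)⟩

theorem IsOp.exists_mul_mem_of_conj (hop : IsOp H S op) (hS : IsNRT H S) {x : G} (hx : x ∈ S)
    (hconj : ∀ y ∈ S, ∃ z ∈ S, ∀ w ∈ S, op (op w y) x = op (op w x) z) :
    ∃ z ∈ S, x * z ∈ H := by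
  obtain ⟨y, hy, hyx⟩ := hop.exists_op_eq_one hS hx
  obtain ⟨z, hz, hw⟩ := hconj y hy
  have hxz : op x z = 1 := by
    simpa [hop.one_op hS hy, hop.one_op hS hx, hyx] using (hw 1 hS.1).symm
  exact ⟨z, hz, by simpa [hxz] using inv_mem (hop x hx z hz).2⟩

end

theorem stmt_18_general (H : Subgroup G)
    (hrcc : ∀ S : Set G, ∀ op : G → G → G, IsNRT H S → IsOp H S op →
      ∀ x ∈ S, ∀ y ∈ S, ∃ z ∈ S, ∀ w ∈ S, op (op w y) x = op (op w x) z) :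
    H.Normal := by
  by_contra hn
  obtain ⟨x, hx2, k, hk, hxk⟩ := exists_mul_self_notMem_and_conj_notMem_of_not_normal hn
  have hx : x ∉ H := fun hx => hxk (mul_mem (mul_mem hx hk) (inv_mem hx))
  obtain ⟨S, hS, hxS, hS_avoid⟩ :=
    exists_isNRT_mem_of_forall_exists (fun s => x * s ∉ H) (exists_mul_inv_mem_and_mul_notMem hk hxk)
      (by simpa) hx hx2
  obtain ⟨op, hop⟩ := hS.exists_isOp
  obtain ⟨z, hzS, hxz⟩ := hop.exists_mul_mem_of_conj hS hxS (hrcc S op hS hop x hxS)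
  exact hS_avoid z hzS hxz

theorem stmt_18 (H : Subgroup G) (hfin : Finite H ∨ H.FiniteIndex)
    (hrcc : ∀ S : Set G, ∀ op : G → G → G, IsNRT H S → IsOp H S op →
      ∀ x ∈ S, ∀ y ∈ S, ∃ z ∈ S, ∀ w ∈ S, op (op w y) x = op (op w x) z) :
    H.Normal :=
  stmt_18_general H hrcc
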